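/- Let γ ≥ 1, let ρ and σ be bipartite states on ℂ^{d_A} ⊗ ℂ^{d_R}, and let Φ be a linear map from matrices on ℂ^{d_A} ⊗ ℂ^{d_R} to matrices on ℂ^{d_B} ⊗ ℂ^{d_{R'}} that is trace-preserving, positive (maps positive semidefinite matrices to positive semidefinite matrices), and PPT-preserving in the sense that the composed map T_B ∘ Φ ∘ T_A is positive (where T_A and T_B denote partial transposition on the first tensor factor of the input and output spaces, respectively). Then E_γ^PPT(Φ(ρ)‖Φ(σ)) ≤ E_γ^PPT(ρ‖σ), where the PPT-measured hockey-stick divergences are taken with respect to the bipartitions B:R' and A:R, respectively. -/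

import Mathlib

noncomputable section
open Matrix ComplexOrder

/-- Bipartite complex matrices on ℂ^{d₁} ⊗ ℂ^{d₂}. -/
abbrev BMat (d₁ d₂ : ℕ) := Matrix (Fin d₁ × Fin d₂) (Fin d₁ × Fin d₂) ℂ

/-- The partial transpose on the first tensor factor:
`T_X(M)((x,y),(x',y')) := M((x',y),(x,y'))`. -/
def ptFst {d₁ d₂ : ℕ} (M : BMat d₁ d₂) : BMat d₁ d₂ :=
  fun p q => M (q.1, p.2) (p.1, q.2)

/-- A quantum state: positive semidefinite with unit trace. -/
def IsState {d₁ d₂ : ℕ} (ρ : BMat d₁ d₂) : Prop := ρ.PosSemidef ∧ ρ.trace = 1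

/-- PPT-measured hockey-stick divergence for γ ≥ 1, with the partial transpose taken
on the first tensor factor. -/
def EgPPT {d₁ d₂ : ℕ} (γ : ℝ) (ρ σ : BMat d₁ d₂) : ℝ :=
  sSup {x : ℝ | ∃ M : BMat d₁ d₂, M.PosSemidef ∧ ((1 : BMat d₁ d₂) - M).PosSemidef ∧
    (ptFst M).PosSemidef ∧ ((1 : BMat d₁ d₂) - ptFst M).PosSemidef ∧
    x = ((M * (ρ - (γ : ℂ) • σ)).trace).re}

/-! Let `M` be a PPT effect for the output pair. The functional `X ↦ Tr[M Φ(X)]` is of the form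
`X ↦ Tr[N X]` (`N` is the Hilbert–Schmidt adjoint `Φ†(M)`), and its Hermitian part `K` satisfies
`Tr[K X] = Re Tr[M Φ(X)]` for Hermitian `X`. Positivity and trace preservation of `Φ` give
`0 ≤ K ≤ 1`; since the partial transpose `T = ptFst` satisfies `Tr[T(A) B] = Tr[A T(B)]`, the
same argument for the positive trace-preserving map `T ∘ Φ ∘ T` and the effect `T(M)` gives
`0 ≤ T(K) ≤ 1`. So `K` is a PPT effect for the input pair with the same value
`Re Tr[M Φ(ρ - γσ)]`. -/

namespace Matrix

section general

variable {n R : Type*} [Fintype n]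

theorem trace_mul_vecMulVec_star [CommSemiring R] [StarRing R] (K : Matrix n n R) (x : n → R) :
    (K * vecMulVec x (star x)).trace = star x ⬝ᵥ K *ᵥ x := by
  rw [mul_vecMulVec, trace_vecMulVec, dotProduct_comm]

theorem posSemidef_of_forall_trace_mul_nonneg [CommRing R] [PartialOrder R] [StarRing R]
    [StarOrderedRing R] {K : Matrix n n R} (hK : K.IsHermitian)
    (h : ∀ X : Matrix n n R, X.PosSemidef → 0 ≤ (K * X).trace) : K.PosSemidef :=
  .of_dotProduct_mulVec_nonneg hK fun x ↦
    trace_mul_vecMulVec_star K x ▸ h _ (posSemidef_vecMulVec_self_star x)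

theorem exists_trace_mul_eq [CommSemiring R] [DecidableEq n] (f : Matrix n n R →ₗ[R] R) :
    ∃ N : Matrix n n R, ∀ X, (N * X).trace = f X := by
  let N : Matrix n n R := of fun i j ↦ f (single j i 1)
  suffices traceLinearMap n R R ∘ₗ LinearMap.mulLeft R N = f from
    ⟨N, LinearMap.congr_fun this⟩
  refine ext_linearMap R fun i j ↦ LinearMap.ext_ring ?_
  simp [N, trace_mul_single]

end general

theorem PosSemidef.trace_mul_nonneg {n 𝕜 : Type*} [Fintype n] [RCLike 𝕜] {A B : Matrix n n 𝕜}
    (hA : A.PosSemidef) (hB : B.PosSemidef) : 0 ≤ (A * B).trace := by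
  classical
  open scoped MatrixOrder in
  obtain ⟨C, rfl⟩ := CStarAlgebra.nonneg_iff_eq_star_mul_self.mp hA.nonneg
  rw [star_eq_conjTranspose, Matrix.mul_assoc, trace_mul_comm]
  exact (hB.mul_mul_conjTranspose_same C).trace_nonneg

section complex

open scoped ComplexStarModule

variable {n : Type*} [Fintype n]

theorem trace_realPart_mul (N : Matrix n n ℂ) {X : Matrix n n ℂ} (hX : X.IsHermitian) :
    ((ℜ N : Matrix n n ℂ) * X).trace = (N * X).trace.re := by
  have hstar : (star N * X).trace = starRingEnd ℂ (N * X).trace := by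
    rw [← Complex.star_def, ← trace_conjTranspose, conjTranspose_mul, hX.eq, trace_mul_comm,
      star_eq_conjTranspose]
  rw [realPart_apply_coe, smul_mul, trace_smul, add_mul, trace_add, hstar, Complex.add_conj,
    ← Complex.coe_smul, smul_eq_mul]
  push_cast
  ring

theorem exists_isHermitian_trace_mul_eq_re [DecidableEq n] (f : Matrix n n ℂ →ₗ[ℂ] ℂ) :
    ∃ K : Matrix n n ℂ, K.IsHermitian ∧ ∀ X, X.IsHermitian → (K * X).trace = (f X).re := by
  obtain ⟨N, hN⟩ := exists_trace_mul_eq f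
  exact ⟨ℜ N, (ℜ N).2, fun X hX ↦ hN X ▸ trace_realPart_mul N hX⟩

end complex

section effect

variable {n m : Type*} [DecidableEq n] [DecidableEq m]

def IsEffect {R : Type*} [Ring R] [PartialOrder R] [StarRing R] (M : Matrix n n R) : Prop :=
  M.PosSemidef ∧ (1 - M).PosSemidef

theorem isEffect_zero : (0 : Matrix n n ℂ).IsEffect :=
  ⟨.zero, by simpa using PosSemidef.one⟩

variable [Fintype n] [Fintype m]

theorem IsEffect.trace_mul_le_trace {M ρ : Matrix n n ℂ} (hM : M.IsEffect)
    (hρ : ρ.PosSemidef) : (M * ρ).trace ≤ ρ.trace := by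
  have := hM.2.trace_mul_nonneg hρ
  rwa [sub_mul, one_mul, trace_sub, sub_nonneg] at this

theorem IsEffect.of_trace_mul_eq_re {K : Matrix n n ℂ} {M : Matrix m m ℂ}
    {Φ : Matrix n n ℂ → Matrix m m ℂ} (hK : K.IsHermitian) (hM : M.IsEffect)
    (hPos : ∀ X, X.PosSemidef → (Φ X).PosSemidef)
    (hTP : ∀ X, X.PosSemidef → (Φ X).trace = X.trace)
    (hKM : ∀ X, X.PosSemidef → (K * X).trace = (M * Φ X).trace.re) : K.IsEffect := by
  refine ⟨posSemidef_of_forall_trace_mul_nonneg hK fun X hX ↦ ?_,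
    posSemidef_of_forall_trace_mul_nonneg (isHermitian_one.sub hK) fun X hX ↦ ?_⟩
  · rw [hKM X hX, Complex.zero_le_real]
    exact (Complex.nonneg_iff.mp (hM.1.trace_mul_nonneg (hPos X hX))).1
  · have hreal : X.trace = X.trace.re :=
      Complex.eq_re_of_ofReal_le (by exact_mod_cast hX.trace_nonneg)
    have h : ((1 - K) * X).trace = ((1 - M) * Φ X).trace.re := by
      rw [sub_mul, one_mul, trace_sub, hKM X hX, sub_mul, one_mul, trace_sub, Complex.sub_re,
        hTP X hX, hreal]
      push_cast
      rfl
    rw [h, Complex.zero_le_real]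
    exact (Complex.nonneg_iff.mp (hM.2.trace_mul_nonneg (hPos X hX))).1

end effect

end Matrix

section partialTranspose

variable {d₁ d₂ : ℕ}

@[simp]
theorem ptFst_ptFst (A : BMat d₁ d₂) : ptFst (ptFst A) = A := rfl

@[simp]
theorem ptFst_zero : ptFst (0 : BMat d₁ d₂) = 0 := rfl

theorem conjTranspose_ptFst (A : BMat d₁ d₂) : (ptFst A)ᴴ = ptFst Aᴴ := rfl

@[simp]
theorem trace_ptFst (A : BMat d₁ d₂) : (ptFst A).trace = A.trace := rfl

theorem Matrix.IsHermitian.ptFst {A : BMat d₁ d₂} (hA : A.IsHermitian) :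
    (ptFst A).IsHermitian := by
  rw [IsHermitian, conjTranspose_ptFst, hA.eq]

theorem trace_ptFst_mul (A B : BMat d₁ d₂) : (ptFst A * B).trace = (A * ptFst B).trace := by
  simp only [trace, diag, mul_apply, ptFst, ← Finset.sum_product', Finset.univ_product_univ]
  exact Fintype.sum_equiv
    ⟨fun x ↦ ((x.2.1, x.1.2), (x.1.1, x.2.2)), fun x ↦ ((x.2.1, x.1.2), (x.1.1, x.2.2)),
      fun _ ↦ rfl, fun _ ↦ rfl⟩ _ _ fun _ ↦ rfl

end partialTranspose

theorem exists_isEffect_ptFst_trace_mul_eq_re {dA dR dB dR' : ℕ} (Φ : BMat dA dR →ₗ[ℂ] BMat dB dR')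
    (hTP : ∀ X : BMat dA dR, (Φ X).trace = X.trace)
    (hPos : ∀ X : BMat dA dR, X.PosSemidef → (Φ X).PosSemidef)
    (hPPT : ∀ X : BMat dA dR, X.PosSemidef → (ptFst (Φ (ptFst X))).PosSemidef)
    {M : BMat dB dR'} (hM : M.IsEffect) (hMT : (ptFst M).IsEffect) :
    ∃ K : BMat dA dR, K.IsEffect ∧ (ptFst K).IsEffect ∧
      ∀ X, X.IsHermitian → (K * X).trace = (M * Φ X).trace.re := by
  obtain ⟨K, hK, hKM⟩ := exists_isHermitian_trace_mul_eq_re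
    (traceLinearMap _ ℂ ℂ ∘ₗ LinearMap.mulLeft ℂ M ∘ₗ Φ)
  replace hKM : ∀ X, X.IsHermitian → (K * X).trace = (M * Φ X).trace.re := hKM
  refine ⟨K, .of_trace_mul_eq_re hK hM hPos (fun X _ ↦ hTP X) fun X hX ↦ hKM X hX.1,
    .of_trace_mul_eq_re hK.ptFst hMT hPPT (fun X _ ↦ by simp [hTP]) fun X hX ↦ ?_, hKM⟩
  rw [trace_ptFst_mul, hKM _ hX.1.ptFst, trace_ptFst_mul, ptFst_ptFst]

def pptTestValues {d₁ d₂ : ℕ} (γ : ℝ) (ρ σ : BMat d₁ d₂) : Set ℝ :=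
  {x | ∃ M : BMat d₁ d₂, M.IsEffect ∧ (ptFst M).IsEffect ∧ x = (M * (ρ - (γ : ℂ) • σ)).trace.re}

section values

variable {d₁ d₂ : ℕ} {γ : ℝ} {ρ σ : BMat d₁ d₂}

theorem EgPPT_eq_sSup_pptTestValues : EgPPT γ ρ σ = sSup (pptTestValues γ ρ σ) := by
  simp only [EgPPT, pptTestValues, IsEffect, and_assoc]

theorem pptTestValues_nonempty : (pptTestValues γ ρ σ).Nonempty :=
  ⟨_, 0, isEffect_zero, by simpa using isEffect_zero, rfl⟩

theorem bddAbove_pptTestValues (hγ : 0 ≤ γ) (hρ : IsState ρ) (hσ : σ.PosSemidef) :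
    BddAbove (pptTestValues γ ρ σ) := by
  refine ⟨1, ?_⟩
  rintro _ ⟨M, hM, -, rfl⟩
  have hσM : 0 ≤ (γ : ℂ) * (M * σ).trace :=
    mul_nonneg (Complex.zero_le_real.mpr hγ) (hM.1.trace_mul_nonneg hσ)
  have h : (M * (ρ - (γ : ℂ) • σ)).trace ≤ 1 := calc
    (M * (ρ - (γ : ℂ) • σ)).trace = (M * ρ).trace - (γ : ℂ) * (M * σ).trace := by
      rw [mul_sub, trace_sub, Matrix.mul_smul, trace_smul, smul_eq_mul]
    _ ≤ (M * ρ).trace := sub_le_self _ hσM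
    _ ≤ 1 := hρ.2 ▸ hM.trace_mul_le_trace hρ.1
  simpa using (Complex.le_def.mp h).1

end values

/-- Data processing of the PPT-measured hockey-stick divergence under positive,
trace-preserving, PPT-preserving maps. -/
theorem stmt_19 {dA dR dB dR' : ℕ} (γ : ℝ) (hγ : 1 ≤ γ)
    (ρ σ : BMat dA dR) (hρ : IsState ρ) (hσ : IsState σ)
    (Φ : BMat dA dR →ₗ[ℂ] BMat dB dR')
    (hTP : ∀ X : BMat dA dR, (Φ X).trace = X.trace)
    (hPos : ∀ X : BMat dA dR, X.PosSemidef → (Φ X).PosSemidef)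
    (hPPT : ∀ X : BMat dA dR, X.PosSemidef → (ptFst (Φ (ptFst X))).PosSemidef) :
    EgPPT γ (Φ ρ) (Φ σ) ≤ EgPPT γ ρ σ := by
  rw [EgPPT_eq_sSup_pptTestValues, EgPPT_eq_sSup_pptTestValues]
  refine csSup_le_csSup (bddAbove_pptTestValues (by linarith) hρ hσ.1) pptTestValues_nonempty ?_
  rintro _ ⟨M, hM, hMT, rfl⟩
  obtain ⟨K, hK, hKT, hKM⟩ := exists_isEffect_ptFst_trace_mul_eq_re Φ hTP hPos hPPT hM hMT
  have hX : (ρ - (γ : ℂ) • σ).IsHermitian :=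
    hρ.1.1.sub (hσ.1.1.smul (Complex.conj_ofReal γ))
  refine ⟨K, hK, hKT, ?_⟩
  rw [hKM _ hX, Complex.ofReal_re, map_sub, map_smul]
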